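/- Let n ≥ 4 and suppose s(x,y+1) and s(z,y) are proper n-sided one-step dice that do not tie. Then s(x,y+1) beats s(z,y). -/
import Mathlib


/-- The number of pairs (i,j) for which the i-th face of die `A` is strictly greater than
the j-th face of die `B`.  (A die is modeled as a multiset of faces, which is equivalent to
a nondecreasing tuple.) -/
def diceWins (A B : Multiset ℕ) : ℕ :=
  (A.map (fun a => (B.filter (fun b => b < a)).card)).sum

/-- Die `A` beats die `B`. -/
def diceBeats (A B : Multiset ℕ) : Prop := diceWins B A < diceWins A B

/-- Dice `A` and `B` tie. -/
def diceTies (A B : Multiset ℕ) : Prop := diceWins A B = diceWins B A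

/-- A proper `n`-sided die: `n` faces, each between `1` and `n`, summing to `n(n+1)/2`. -/
def isProperDie (n : ℕ) (A : Multiset ℕ) : Prop :=
  Multiset.card A = n ∧ (∀ x ∈ A, 1 ≤ x ∧ x ≤ n) ∧ A.sum = n * (n + 1) / 2

/-- The one-step die `s(a,b)`: the multiset `{1,…,n}` with `a` and `b` removed and
`a+1` and `b-1` added. -/
def stepDie (n a b : ℕ) : Multiset ℕ :=
  (Multiset.Icc 1 n - {a, b}) + {a + 1, b - 1}

/-- The conditions on `(a,b)` under which `s(a,b)` is a proper `n`-sided one-step die. -/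
def validStep (n a b : ℕ) : Prop :=
  1 ≤ a ∧ a ≤ n - 1 ∧ 2 ≤ b ∧ b ≤ n ∧ b ≠ a ∧ b ≠ a + 1

instance (n a b : ℕ) : Decidable (validStep n a b) := by unfold validStep; infer_instance

/-- `D` is a proper `n`-sided one-step die. -/
def isOneStepDie (n : ℕ) (D : Multiset ℕ) : Prop :=
  ∃ a b, validStep n a b ∧ D = stepDie n a b

/-- A three-element set of dice is intransitive if it can be labeled so that
`A` beats `B`, `B` beats `C` and `C` beats `A`. -/
def IntransitiveTriple (s : Finset (Multiset ℕ)) : Prop :=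
  ∃ A B C, s = {A, B, C} ∧ diceBeats A B ∧ diceBeats B C ∧ diceBeats C A

/-- A three-element set of dice is transitive if it can be labeled so that
`A` beats `B`, `A` beats `C` and `B` beats `C`. -/
def TransitiveTriple (s : Finset (Multiset ℕ)) : Prop :=
  ∃ A B C, s = {A, B, C} ∧ diceBeats A B ∧ diceBeats A C ∧ diceBeats B C

/-- The set of unordered triples of pairwise distinct proper `n`-sided one-step dice
in which no two of the three dice tie. -/
def tripleSet (n : ℕ) : Set (Finset (Multiset ℕ)) :=
  {s | s.card = 3 ∧ (∀ D ∈ s, isOneStepDie n D) ∧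
    ∀ A ∈ s, ∀ B ∈ s, A ≠ B → ¬ diceTies A B}


def cnt (B : Multiset ℕ) (k : ℕ) : ℕ := (B.filter (fun b => b < k)).card

lemma wins_add_left (A C B : Multiset ℕ) : diceWins (A + C) B = diceWins A B + diceWins C B := by
  simp [diceWins]

lemma wins_add_right (A B C : Multiset ℕ) : diceWins A (B + C) = diceWins A B + diceWins A C := by
  simp [diceWins, Multiset.filter_add, Multiset.sum_map_add]

lemma wins_pair_left (a b : ℕ) (B : Multiset ℕ) :
    diceWins {a, b} B = cnt B a + cnt B b := by
  simp [diceWins, cnt, Multiset.insert_eq_cons]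

lemma cnt_add (B C : Multiset ℕ) (k : ℕ) : cnt (B + C) k = cnt B k + cnt C k := by
  simp [cnt, Multiset.filter_add]

lemma cnt_pair (a b k : ℕ) :
    cnt {a, b} k = (if a < k then 1 else 0) + (if b < k then 1 else 0) := by
  simp only [cnt, Multiset.insert_eq_cons, Multiset.filter_cons, Multiset.filter_singleton]
  split_ifs <;> simp

lemma cnt_Icc (n k : ℕ) : cnt (Multiset.Icc 1 n) k = min (k - 1) n := by
  have : (Multiset.Icc 1 n).filter (fun b => b < k) = ((Finset.Icc 1 n).filter (fun b => b < k)).val := by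
    simp [Multiset.Icc, Finset.filter]
  rw [cnt, this]
  have : (Finset.Icc 1 n).filter (fun b => b < k) = Finset.Icc 1 (min (k - 1) n) := by
    ext a; simp [Finset.mem_Icc, Finset.mem_filter]; omega
  rw [this]
  simp [Nat.card_Icc]

lemma wins_singleton_right (A : Multiset ℕ) (m : ℕ) :
    diceWins A {m} = (A.filter (fun a => m < a)).card := by
  induction A using Multiset.induction_on with
  | empty => simp [diceWins]
  | cons a s ih =>
    rw [diceWins, Multiset.map_cons, Multiset.sum_cons, Multiset.filter_cons]
    rw [diceWins] at ih
    rw [ih, Multiset.filter_singleton]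
    split_ifs <;> simp <;> omega

lemma wins_Icc_singleton (n m : ℕ) : diceWins (Multiset.Icc 1 n) {m} = n - m := by
  rw [wins_singleton_right]
  have : (Multiset.Icc 1 n).filter (fun a => m < a) = ((Finset.Icc 1 n).filter (fun a => m < a)).val := by
    simp [Multiset.Icc, Finset.filter]
  rw [this]
  have : (Finset.Icc 1 n).filter (fun a => m < a) = Finset.Icc (m + 1) n := by
    ext a; simp [Finset.mem_Icc, Finset.mem_filter]; omega
  rw [this]; simp [Nat.card_Icc]

lemma wins_pair_right (A : Multiset ℕ) (a b : ℕ) :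
    diceWins A {a, b} = diceWins A {a} + diceWins A {b} := by
  rw [show ({a, b} : Multiset ℕ) = {a} + {b} by
    rw [Multiset.insert_eq_cons, Multiset.singleton_add], wins_add_right]

lemma pair_le_Icc (n a b : ℕ) (ha1 : 1 ≤ a) (ha2 : a ≤ n) (hb1 : 1 ≤ b) (hb2 : b ≤ n)
    (hab : a ≠ b) : ({a, b} : Multiset ℕ) ≤ Multiset.Icc 1 n := by
  rw [Multiset.le_iff_count]
  intro k
  have hnd : (Multiset.Icc 1 n).Nodup := Multiset.nodup_Icc
  by_cases hka : k = a
  · subst hka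
    have : k ∈ Multiset.Icc 1 n := by rw [Multiset.mem_Icc]; omega
    rw [Multiset.count_eq_one_of_mem hnd this]
    simp [Multiset.insert_eq_cons, Multiset.count_cons, Multiset.count_singleton]
    omega
  by_cases hkb : k = b
  · subst hkb
    have : k ∈ Multiset.Icc 1 n := by rw [Multiset.mem_Icc]; omega
    rw [Multiset.count_eq_one_of_mem hnd this]
    simp [Multiset.insert_eq_cons, Multiset.count_cons, Multiset.count_singleton]
    omega
  · simp [Multiset.insert_eq_cons, Multiset.count_cons, Multiset.count_singleton, hka, hkb]

lemma step_eq (n a b : ℕ) (h : validStep n a b) :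
    stepDie n a b + {a, b} = Multiset.Icc 1 n + {a + 1, b - 1} := by
  obtain ⟨h1, h2, h3, h4, h5, h6⟩ := h
  have hle : ({a, b} : Multiset ℕ) ≤ Multiset.Icc 1 n :=
    pair_le_Icc n a b h1 (by omega) (by omega) h4 (Ne.symm h5)
  rw [stepDie, add_right_comm, tsub_add_cancel_of_le hle]

lemma cnt_step (n a b k : ℕ) (h : validStep n a b) :
    cnt (stepDie n a b) k + (if k = a + 1 then 1 else 0)
      = min (k - 1) n + (if k = b then 1 else 0) := by
  obtain ⟨h1, h2, h3, h4, h5, h6⟩ := h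
  have key := congrArg (fun s => cnt s k) (step_eq n a b ⟨h1, h2, h3, h4, h5, h6⟩)
  simp only [cnt_add, cnt_pair, cnt_Icc] at key
  have i1 : (if a < k then (1:ℕ) else 0)
      = (if a + 1 < k then 1 else 0) + (if k = a + 1 then 1 else 0) := by
    split_ifs <;> omega
  have i2 : (if b - 1 < k then (1:ℕ) else 0)
      = (if b < k then 1 else 0) + (if k = b then 1 else 0) := by
    split_ifs <;> omega
  rw [i1, i2] at key
  set q1 := (if a + 1 < k then (1:ℕ) else 0) with hq1
  set q2 := (if k = a + 1 then (1:ℕ) else 0) with hq2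
  set q3 := (if b < k then (1:ℕ) else 0) with hq3
  set q4 := (if k = b then (1:ℕ) else 0) with hq4
  clear_value q1 q2 q3 q4
  omega

lemma arith1 (n x y z w1 w2 w3 w4 w5 v1 v2 v3 v4 u1 u2 u3 u4 : ℕ)
    (hn : 4 ≤ n) (hx1 : 1 ≤ x) (hx2 : x ≤ n - 1)
    (hz1 : 1 ≤ z) (hz2 : z ≤ n - 1) (hy1 : 2 ≤ y) (hy2' : y + 1 ≤ n)
    (e1 : w1 + (v1 + v4) = w3 + (v2 + v3))
    (e2 : w2 + (u1 + u3) = w4 + (u2 + u4))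
    (f1 : w3 + (n - z + (n - y)) = w5 + (n - (z + 1) + (n - (y - 1))))
    (f2 : w4 + (n - x + (n - (y + 1))) = w5 + (n - (x + 1) + (n - y))) :
    w1 + (v1 + v4) + (u2 + u4) = w2 + (u1 + u3) + (v2 + v3) := by omega

lemma arith2 (n x y z w1 w2 v1 v2 v3 v4 u1 u2 u3 u4 p1 p2 p3 p4 p5 p6 : ℕ)
    (hx1 : 1 ≤ x) (hz1 : 1 ≤ z) (hy1 : 2 ≤ y) (hn : 4 ≤ n)
    (hx2 : x ≤ n - 1) (hz2 : z ≤ n - 1) (hy2' : y + 1 ≤ n)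
    (hw : w1 ≠ w2)
    (hkey : w1 + (v1 + v4) + (u2 + u4) = w2 + (u1 + u3) + (v2 + v3))
    (c1 : v1 + p1 = min (x - 1) n + 0)
    (c2 : v2 + p2 = min (x + 1 - 1) n + p3)
    (c3 : v3 + 0 = min (y - 1) n + 1)
    (c4 : v4 + 0 = min (y + 1 - 1) n + 0)
    (c5 : u1 + p4 = min (z - 1) n + p5)
    (c6 : u2 + p2 = min (z + 1 - 1) n + 0)
    (c7 : u3 + p3 = min (y - 1) n + 0)
    (c8 : u4 + p6 = min (y - 1 - 1) n + 0)
    (hb4 : p4 ≤ 1) :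
    w2 < w1 := by omega

set_option maxHeartbeats 1000000 in
lemma final_arith (n x y z w1 w2 w3 w4 w5 v1 v2 v3 v4 u1 u2 u3 u4 : ℕ)
    (hn : 4 ≤ n) (hx1 : 1 ≤ x) (hx2 : x ≤ n - 1) (hy2' : y + 1 ≤ n)
    (hne1 : y + 1 ≠ x) (hne2 : y + 1 ≠ x + 1)
    (hz1 : 1 ≤ z) (hz2 : z ≤ n - 1) (hy1 : 2 ≤ y) (hy2 : y ≤ n)
    (hne3 : y ≠ z) (hne4 : y ≠ z + 1)
    (hw : w1 ≠ w2)
    (e1 : w1 + (v1 + v4) = w3 + (v2 + v3))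
    (e2 : w2 + (u1 + u3) = w4 + (u2 + u4))
    (f1 : w3 + (n - z + (n - y)) = w5 + (n - (z + 1) + (n - (y - 1))))
    (f2 : w4 + (n - x + (n - (y + 1))) = w5 + (n - (x + 1) + (n - y)))
    (c1 : v1 + (if x = z + 1 then 1 else 0) = min (x - 1) n + (if x = y then 1 else 0))
    (c2 : v2 + (if x + 1 = z + 1 then 1 else 0) = min (x + 1 - 1) n + (if x + 1 = y then 1 else 0))
    (c3 : v3 + (if y = z + 1 then 1 else 0) = min (y - 1) n + (if y = y then 1 else 0))
    (c4 : v4 + (if y + 1 = z + 1 then 1 else 0) = min (y + 1 - 1) n + (if y + 1 = y then 1 else 0))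
    (c5 : u1 + (if z = x + 1 then 1 else 0) = min (z - 1) n + (if z = y + 1 then 1 else 0))
    (c6 : u2 + (if z + 1 = x + 1 then 1 else 0) = min (z + 1 - 1) n + (if z + 1 = y + 1 then 1 else 0))
    (c7 : u3 + (if y = x + 1 then 1 else 0) = min (y - 1) n + (if y = y + 1 then 1 else 0))
    (c8 : u4 + (if y - 1 = x + 1 then 1 else 0) = min (y - 1 - 1) n + (if y - 1 = y + 1 then 1 else 0)) :
    w2 < w1 := by
  have hkey := arith1 n x y z w1 w2 w3 w4 w5 v1 v2 v3 v4 u1 u2 u3 u4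
    hn hx1 hx2 hz1 hz2 hy1 hy2' e1 e2 f1 f2
  clear e1 e2 f1 f2
  clear w3 w4 w5
  rw [if_neg (show ¬ x = y from fun h => hne2 (by omega))] at c1
  simp only [show (x + 1 = z + 1) ↔ (x = z) from by constructor <;> omega,
      show (x + 1 = y) ↔ (y = x + 1) from by constructor <;> omega] at c2
  rw [if_neg hne4, if_pos rfl] at c3
  rw [if_neg (show ¬ y + 1 = z + 1 from fun h => hne3 (by omega)),
      if_neg (show ¬ y + 1 = y from by omega)] at c4
  simp only [show (z + 1 = x + 1) ↔ (x = z) from by constructor <;> omega] at c6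
  rw [if_neg (show ¬ z + 1 = y + 1 from fun h => hne3 (by omega))] at c6
  rw [if_neg (show ¬ y = y + 1 from by omega)] at c7
  rw [if_neg (show ¬ y - 1 = y + 1 from by omega)] at c8
  simp only [show (y - 1 = x + 1) ↔ (y = x + 2) from by constructor <;> omega] at c8
  have hb4 : (if z = x + 1 then (1:ℕ) else 0) ≤ 1 := by split_ifs <;> omega
  exact arith2 n x y z w1 w2 v1 v2 v3 v4 u1 u2 u3 u4 _ _ _ _ _ _
    hx1 hz1 hy1 hn hx2 hz2 hy2' hw hkey c1 c2 c3 c4 c5 c6 c7 c8 hb4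

set_option maxHeartbeats 1000000 in
theorem beats_form_four (n x y z : ℕ) (hn : 4 ≤ n)
    (h1 : validStep n x (y + 1)) (h2 : validStep n z y)
    (hnotie : ¬ diceTies (stepDie n x (y + 1)) (stepDie n z y)) :
    diceBeats (stepDie n x (y + 1)) (stepDie n z y) := by
  obtain ⟨hx1, hx2, hy1', hy2', hne1, hne2⟩ := h1
  obtain ⟨hz1, hz2, hy1, hy2, hne3, hne4⟩ := h2
  have hvA : validStep n x (y + 1) := ⟨hx1, hx2, hy1', hy2', hne1, hne2⟩
  have hvB : validStep n z y := ⟨hz1, hz2, hy1, hy2, hne3, hne4⟩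
  have hA : stepDie n x (y + 1) + {x, y + 1} = Multiset.Icc 1 n + {x + 1, y} := by
    have := step_eq n x (y + 1) hvA
    simpa using this
  have hB : stepDie n z y + {z, y} = Multiset.Icc 1 n + {z + 1, y - 1} := step_eq n z y hvB
  have e1 := congrArg (fun s => diceWins s (stepDie n z y)) hA
  simp only [wins_add_left, wins_pair_left] at e1
  have e2 := congrArg (fun s => diceWins s (stepDie n x (y + 1))) hB
  simp only [wins_add_left, wins_pair_left] at e2
  have f1 := congrArg (fun s => diceWins (Multiset.Icc 1 n) s) hB
  simp only [wins_add_right, wins_pair_right, wins_Icc_singleton] at f1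
  have f2 := congrArg (fun s => diceWins (Multiset.Icc 1 n) s) hA
  simp only [wins_add_right, wins_pair_right, wins_Icc_singleton] at f2
  have hw : diceWins (stepDie n x (y + 1)) (stepDie n z y)
      ≠ diceWins (stepDie n z y) (stepDie n x (y + 1)) := hnotie
  rw [diceBeats]
  exact final_arith n x y z _ _ _ _ _ _ _ _ _ _ _ _ _
    hn hx1 hx2 hy2' hne1 hne2 hz1 hz2 hy1 hy2 hne3 hne4
    hw e1 e2 f1 f2
    (cnt_step n z y x hvB) (cnt_step n z y (x + 1) hvB)
    (cnt_step n z y y hvB) (cnt_step n z y (y + 1) hvB)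
    (cnt_step n x (y + 1) z hvA) (cnt_step n x (y + 1) (z + 1) hvA)
    (cnt_step n x (y + 1) y hvA) (cnt_step n x (y + 1) (y - 1) hvA)
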